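/- arXiv:2304.02473 — 2 statements merged into one kernel-verified Lean document; each statement's English description precedes it below -/
import Mathlib

section
/- Let f₁, f₀ : (0,∞) → ℝ be differentiable with f₀'(r) = -r·f₁'(r) for all r > 0, and define G(μ) = μ·f₁(μ/(1-μ)) + (1-μ)·f₀(μ/(1-μ)) for μ ∈ (0,1). Then G is differentiable on (0,1) with G'(μ) = f₁(μ/(1-μ)) - f₀(μ/(1-μ)) for all μ ∈ (0,1). -/
/-! The chain rule gives `G'(μ) = f₁(r) - f₀(r) + (μ f₁'(r) + (1 - μ) f₀'(r)) r'(μ)` with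
`r = μ / (1 - μ)`. Since `μ = (1 - μ) r`, the compatibility condition makes the bracket
`(1 - μ) (r f₁'(r) + f₀'(r))` vanish. -/

theorem hasDerivAt_div_one_sub {x : ℝ} (hx : x ≠ 1) :
    HasDerivAt (fun y : ℝ => y / (1 - y)) (((1 - x) ^ 2)⁻¹) x := by
  have hx' : 1 - x ≠ 0 := sub_ne_zero.mpr hx.symm
  refine ((hasDerivAt_id x).div ((hasDerivAt_id x).const_sub 1) hx').congr_deriv ?_
  simp only [id]
  field_simp
  ring

theorem hasDerivAt_mix_comp_div_one_sub {f1 f0 : ℝ → ℝ} {d1 x : ℝ} (hx : x ≠ 1)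
    (h1 : HasDerivAt f1 d1 (x / (1 - x)))
    (h0 : HasDerivAt f0 (-(x / (1 - x)) * d1) (x / (1 - x))) :
    HasDerivAt (fun μ : ℝ => μ * f1 (μ / (1 - μ)) + (1 - μ) * f0 (μ / (1 - μ)))
      (f1 (x / (1 - x)) - f0 (x / (1 - x))) x := by
  have hx' : 1 - x ≠ 0 := sub_ne_zero.mpr hx.symm
  have hr := hasDerivAt_div_one_sub hx
  refine (((hasDerivAt_id x).mul (h1.comp x hr)).add
    (((hasDerivAt_id x).const_sub 1).mul (h0.comp x hr))).congr_deriv ?_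
  simp only [id, Function.comp_apply]
  field_simp
  ring

/-- If `f₁, f₀` are differentiable on `(0,∞)` with `f₀'(r) = -r·f₁'(r)`, then
`G(μ) = μ·f₁(μ/(1-μ)) + (1-μ)·f₀(μ/(1-μ))` is differentiable on `(0,1)` with
`G'(μ) = f₁(μ/(1-μ)) - f₀(μ/(1-μ))`. -/
theorem fvnce_stmt2 (f1 f0 : ℝ → ℝ)
    (hf1 : ∀ r > (0 : ℝ), DifferentiableAt ℝ f1 r)
    (hf0 : ∀ r > (0 : ℝ), DifferentiableAt ℝ f0 r)
    (hcompat : ∀ r > (0 : ℝ), deriv f0 r = -r * deriv f1 r) :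
    ∀ μ ∈ Set.Ioo (0 : ℝ) 1,
      HasDerivAt (fun μ : ℝ => μ * f1 (μ / (1 - μ)) + (1 - μ) * f0 (μ / (1 - μ)))
        (f1 (μ / (1 - μ)) - f0 (μ / (1 - μ))) μ := by
  rintro μ ⟨hμ0, hμ1⟩
  have hr : 0 < μ / (1 - μ) := div_pos hμ0 (sub_pos.mpr hμ1)
  refine hasDerivAt_mix_comp_div_one_sub hμ1.ne (hf1 _ hr).hasDerivAt ?_
  rw [← hcompat _ hr]
  exact (hf0 _ hr).hasDerivAt
end

section
/- For every β ≥ 0, let f₁(r) = log(r+β) and f₀(r) = β·log(r+β) - r, and let G(μ) = μ·f₁(μ/(1-μ)) + (1-μ)·f₀(μ/(1-μ)) for μ ∈ (0,1). Then G is twice differentiable on (0,1) with G''(μ) = 1 / ((1-μ)²·(μ + β(1-μ))) > 0 for all μ ∈ (0,1); in particular G is strictly convex on (0,1), so the pair (f₁, f₀) has the double ELBO property. -/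
/-- A pair `(f₁, f₀)` of differentiable functions on `(0,∞)` has the *double ELBO property* if
both are concave on `(0,∞)`, they satisfy the compatibility condition `f₀'(r) = -r·f₁'(r)` for
all `r > 0`, and `G(μ) = μ·f₁(μ/(1-μ)) + (1-μ)·f₀(μ/(1-μ))` is convex on `(0,1)`. -/
def DoubleELBO (f1 f0 : ℝ → ℝ) : Prop :=
  (∀ r > (0 : ℝ), DifferentiableAt ℝ f1 r) ∧
  (∀ r > (0 : ℝ), DifferentiableAt ℝ f0 r) ∧
  ConcaveOn ℝ (Set.Ioi (0 : ℝ)) f1 ∧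
  ConcaveOn ℝ (Set.Ioi (0 : ℝ)) f0 ∧
  (∀ r > (0 : ℝ), deriv f0 r = -r * deriv f1 r) ∧
  ConvexOn ℝ (Set.Ioo (0 : ℝ) 1)
    (fun μ => μ * f1 (μ / (1 - μ)) + (1 - μ) * f0 (μ / (1 - μ)))

/-!
Write `r = μ / (1 - μ)`. Since `μ = (1 - μ) r`, we have `G(μ) = (1 - μ) φ(r)` with
`φ(r) = r f₁(r) + f₀(r)`, i.e. `G` is a perspective of `φ`. Differentiating twice gives
`G''(μ) = φ''(r) / (1 - μ)³`, and the compatibility condition `f₀' = -r f₁'` makes `φ' = f₁`,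
so `G''(μ) = f₁'(r) / (1 - μ)³`. For `f₁ = log (· + β)` this is
`1 / ((r + β) (1 - μ)³) = 1 / ((1 - μ)² (μ + β (1 - μ)))`, which is positive. Concavity of `f₁`
and of `f₀ = β f₁ - id` comes from that of `log`.
-/

open Set Filter Topology

/-- The perspective `(x, t) ↦ t • φ (x / t)` of `φ` along the segment `x + t = 1`. -/
noncomputable def perspective (φ : ℝ → ℝ) (μ : ℝ) : ℝ := (1 - μ) * φ (μ / (1 - μ))

lemma div_one_sub_pos {μ : ℝ} (hμ : μ ∈ Ioo 0 1) : 0 < μ / (1 - μ) :=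
  div_pos hμ.1 (sub_pos.2 hμ.2)

lemma hasDerivAt_div_one_sub_s7 {μ : ℝ} (hμ : μ ≠ 1) :
    HasDerivAt (fun μ => μ / (1 - μ)) (1 / (1 - μ) ^ 2) μ := by
  have h : 1 - μ ≠ 0 := sub_ne_zero.2 hμ.symm
  refine ((hasDerivAt_id' μ).div ((hasDerivAt_id' μ).const_sub 1) h).congr_deriv ?_
  field_simp
  ring

section Perspective

variable {φ φ' φ'' : ℝ → ℝ}

lemma hasDerivAt_perspective {μ d : ℝ} (hμ : μ ≠ 1) (hφ : HasDerivAt φ d (μ / (1 - μ))) :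
    HasDerivAt (perspective φ) ((1 + μ / (1 - μ)) * d - φ (μ / (1 - μ))) μ := by
  have h : 1 - μ ≠ 0 := sub_ne_zero.2 hμ.symm
  refine (((hasDerivAt_id' μ).const_sub 1).mul
    (hφ.comp μ (hasDerivAt_div_one_sub_s7 hμ))).congr_deriv ?_
  simp only [Function.comp_apply]
  field_simp
  ring

lemma deriv_perspective_eventuallyEq (hφ : ∀ r > 0, HasDerivAt φ (φ' r) r) {μ : ℝ}
    (hμ : μ ∈ Ioo 0 1) :
    deriv (perspective φ) =ᶠ[𝓝 μ]
      fun μ => (1 + μ / (1 - μ)) * φ' (μ / (1 - μ)) - φ (μ / (1 - μ)) :=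
  eventually_of_mem (isOpen_Ioo.mem_nhds hμ) fun _ hx =>
    (hasDerivAt_perspective hx.2.ne (hφ _ (div_one_sub_pos hx))).deriv

lemma hasDerivAt_deriv_perspective (hφ : ∀ r > 0, HasDerivAt φ (φ' r) r)
    (hφ' : ∀ r > 0, HasDerivAt φ' (φ'' r) r) {μ : ℝ} (hμ : μ ∈ Ioo 0 1) :
    HasDerivAt (deriv (perspective φ)) (φ'' (μ / (1 - μ)) / (1 - μ) ^ 3) μ := by
  have h : 1 - μ ≠ 0 := sub_ne_zero.2 hμ.2.ne'
  have hr := div_one_sub_pos hμ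
  have hψ : HasDerivAt (fun r => (1 + r) * φ' r - φ r)
      (1 * φ' (μ / (1 - μ)) + (1 + μ / (1 - μ)) * φ'' (μ / (1 - μ)) - φ' (μ / (1 - μ)))
      (μ / (1 - μ)) :=
    (((hasDerivAt_id' _).const_add 1).mul (hφ' _ hr)).sub (hφ _ hr)
  -- `ψ' = (1 + r) φ''`, and `1 + r = 1 / (1 - μ)` while `dr/dμ = 1 / (1 - μ)²`
  refine ((hψ.comp μ (hasDerivAt_div_one_sub_s7 hμ.2.ne)).congr_of_eventuallyEq
    (deriv_perspective_eventuallyEq hφ hμ)).congr_deriv ?_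
  field_simp
  ring

end Perspective

section Elbo

variable {f₁ f₀ f₁' : ℝ → ℝ}

lemma elbo_eq_perspective {μ : ℝ} (hμ : μ ≠ 1) :
    μ * f₁ (μ / (1 - μ)) + (1 - μ) * f₀ (μ / (1 - μ)) =
      perspective (fun r => r * f₁ r + f₀ r) μ := by
  have h : 1 - μ ≠ 0 := sub_ne_zero.2 hμ.symm
  simp only [perspective]
  field_simp

lemma elbo_eventuallyEq_perspective {μ : ℝ} (hμ : μ ≠ 1) :
    (fun μ => μ * f₁ (μ / (1 - μ)) + (1 - μ) * f₀ (μ / (1 - μ))) =ᶠ[𝓝 μ]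
      perspective (fun r => r * f₁ r + f₀ r) :=
  eventually_of_mem (isOpen_ne.mem_nhds hμ) fun _ hx => elbo_eq_perspective hx

lemma hasDerivAt_mul_add_of_deriv_eq_neg_mul {r : ℝ} (hf₁ : HasDerivAt f₁ (f₁' r) r)
    (hf₀ : HasDerivAt f₀ (-r * f₁' r) r) :
    HasDerivAt (fun r => r * f₁ r + f₀ r) (f₁ r) r :=
  (((hasDerivAt_id' r).mul hf₁).add hf₀).congr_deriv (by ring)

variable (hf₁ : ∀ r > 0, HasDerivAt f₁ (f₁' r) r) (hf₀ : ∀ r > 0, HasDerivAt f₀ (-r * f₁' r) r)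
include hf₁ hf₀

lemma differentiableAt_elbo {μ : ℝ} (hμ : μ ∈ Ioo 0 1) :
    DifferentiableAt ℝ (fun μ => μ * f₁ (μ / (1 - μ)) + (1 - μ) * f₀ (μ / (1 - μ))) μ :=
  (hasDerivAt_perspective hμ.2.ne (hasDerivAt_mul_add_of_deriv_eq_neg_mul
    (hf₁ _ (div_one_sub_pos hμ)) (hf₀ _ (div_one_sub_pos hμ)))).differentiableAt
    |>.congr_of_eventuallyEq (elbo_eventuallyEq_perspective hμ.2.ne)

lemma hasDerivAt_deriv_elbo {μ : ℝ} (hμ : μ ∈ Ioo 0 1) :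
    HasDerivAt (deriv fun μ => μ * f₁ (μ / (1 - μ)) + (1 - μ) * f₀ (μ / (1 - μ)))
      (f₁' (μ / (1 - μ)) / (1 - μ) ^ 3) μ :=
  (hasDerivAt_deriv_perspective
    (fun r hr => hasDerivAt_mul_add_of_deriv_eq_neg_mul (hf₁ r hr) (hf₀ r hr)) hf₁ hμ)
    |>.congr_of_eventuallyEq (elbo_eventuallyEq_perspective hμ.2.ne).deriv

lemma strictConvexOn_elbo (hf₁' : ∀ r > 0, 0 < f₁' r) :
    StrictConvexOn ℝ (Ioo 0 1)
      (fun μ => μ * f₁ (μ / (1 - μ)) + (1 - μ) * f₀ (μ / (1 - μ))) := by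
  refine strictConvexOn_of_deriv2_pos' (convex_Ioo 0 1)
    (fun μ hμ => (differentiableAt_elbo hf₁ hf₀ hμ).continuousAt.continuousWithinAt)
    fun μ hμ => ?_
  rw [Function.iterate_succ_apply, Function.iterate_one,
    (hasDerivAt_deriv_elbo hf₁ hf₀ hμ).deriv]
  exact div_pos (hf₁' _ (div_one_sub_pos hμ)) (pow_pos (sub_pos.2 hμ.2) 3)

end Elbo

section LogShift

variable {β : ℝ}

lemma hasDerivAt_log_add {r : ℝ} (h : 0 < r + β) :
    HasDerivAt (fun r => Real.log (r + β)) (r + β)⁻¹ r :=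
  (((hasDerivAt_id' r).add_const β).log h.ne').congr_deriv (one_div _)

lemma hasDerivAt_mul_log_add_sub {r : ℝ} (h : 0 < r + β) :
    HasDerivAt (fun r => β * Real.log (r + β) - r) (-r * (r + β)⁻¹) r :=
  (((hasDerivAt_log_add h).const_mul β).sub (hasDerivAt_id' r)).congr_deriv (by field_simp; ring)

lemma concaveOn_log_add (hβ : 0 ≤ β) : ConcaveOn ℝ (Ioi 0) fun r => Real.log (r + β) :=
  (strictConcaveOn_log_Ioi.concaveOn.translate_left β).subset
    (fun r (hr : 0 < r) => show 0 < β + r by linarith) (convex_Ioi 0)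

end LogShift

/-- For `β ≥ 0`, `f₁(r) = log(r+β)`, `f₀(r) = β·log(r+β) - r`, the induced
`G(μ) = μ·f₁(μ/(1-μ)) + (1-μ)·f₀(μ/(1-μ))` is twice differentiable on `(0,1)` with
`G''(μ) = 1/((1-μ)²·(μ + β(1-μ))) > 0`; hence `G` is strictly convex on `(0,1)` and the pair
has the double ELBO property. -/
theorem fvnce_stmt7 (β : ℝ) (hβ : 0 ≤ β) :
    (∀ μ ∈ Set.Ioo (0 : ℝ) 1,
      DifferentiableAt ℝ
        (fun μ : ℝ => μ * Real.log (μ / (1 - μ) + β) +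
          (1 - μ) * (β * Real.log (μ / (1 - μ) + β) - μ / (1 - μ))) μ ∧
      DifferentiableAt ℝ
        (deriv (fun μ : ℝ => μ * Real.log (μ / (1 - μ) + β) +
          (1 - μ) * (β * Real.log (μ / (1 - μ) + β) - μ / (1 - μ)))) μ ∧
      deriv (deriv (fun μ : ℝ => μ * Real.log (μ / (1 - μ) + β) +
          (1 - μ) * (β * Real.log (μ / (1 - μ) + β) - μ / (1 - μ)))) μ =
        1 / ((1 - μ) ^ 2 * (μ + β * (1 - μ))) ∧
      0 < 1 / ((1 - μ) ^ 2 * (μ + β * (1 - μ)))) ∧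
    StrictConvexOn ℝ (Set.Ioo (0 : ℝ) 1)
      (fun μ : ℝ => μ * Real.log (μ / (1 - μ) + β) +
        (1 - μ) * (β * Real.log (μ / (1 - μ) + β) - μ / (1 - μ))) ∧
    DoubleELBO (fun r => Real.log (r + β)) (fun r => β * Real.log (r + β) - r) := by
  have hpos : ∀ r > 0, 0 < r + β := fun r hr => by linarith
  have hf₁ : ∀ r > 0, HasDerivAt (fun r => Real.log (r + β)) (r + β)⁻¹ r :=
    fun r hr => hasDerivAt_log_add (hpos r hr)
  have hf₀ : ∀ r > 0, HasDerivAt (fun r => β * Real.log (r + β) - r) (-r * (r + β)⁻¹) r :=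
    fun r hr => hasDerivAt_mul_log_add_sub (hpos r hr)
  have hG'' : ∀ μ ∈ Ioo (0 : ℝ) 1, HasDerivAt (deriv fun μ : ℝ => μ * Real.log (μ / (1 - μ) + β) +
        (1 - μ) * (β * Real.log (μ / (1 - μ) + β) - μ / (1 - μ)))
      (1 / ((1 - μ) ^ 2 * (μ + β * (1 - μ)))) μ := fun μ hμ =>
    (hasDerivAt_deriv_elbo hf₁ hf₀ hμ).congr_deriv (by
      have : 1 - μ ≠ 0 := sub_ne_zero.2 hμ.2.ne'
      field_simp)
  have hconvex := strictConvexOn_elbo hf₁ hf₀ fun r hr => inv_pos.2 (hpos r hr)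
  refine ⟨fun μ hμ => ⟨differentiableAt_elbo hf₁ hf₀ hμ, (hG'' μ hμ).differentiableAt,
    (hG'' μ hμ).deriv, ?_⟩, hconvex, fun r hr => (hf₁ r hr).differentiableAt,
    fun r hr => (hf₀ r hr).differentiableAt, concaveOn_log_add hβ, ?_,
    fun r hr => by rw [(hf₀ r hr).deriv, (hf₁ r hr).deriv], hconvex.convexOn⟩
  · have : 0 < μ + β * (1 - μ) := by nlinarith [hμ.1, hμ.2]
    have : 0 < 1 - μ := sub_pos.2 hμ.2
    positivity
  · exact ((concaveOn_log_add hβ).smul hβ).sub (convexOn_id (convex_Ioi 0))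
end
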